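/- arXiv:1610.09850 — 2 statements merged into one kernel-verified Lean document; each statement's English description precedes it below -/
import Mathlib

section
/- There exist constants c and C with 0 < c ≤ 1 ≤ C (one may take c = min(c₀,1) and C = max(C₀,1), where c₀ and C₀ are the minimum and maximum of |J_t x|² over {|x| = |t| = 1}) such that for every (x,t) ∈ G*: c |x|² / N(x,t)² ≤ |∇_H N(x,t)|² ≤ C |x|² / N(x,t)². -/
open MeasureTheory Filter
open scoped BigOperators ENNReal NNReal

noncomputable section

/-- Points of the Métivier group `G = ℝ^{2n} × ℝ^m`. -/
abbrev GrpPt (n m : ℕ) := (Fin (2*n) → ℝ) × (Fin m → ℝ)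

/-- Euclidean norm on `Fin k → ℝ`. -/
def e2norm {k : ℕ} (x : Fin k → ℝ) : ℝ := Real.sqrt (∑ i, (x i)^2)

/-- Kaplan norm `N(x,t) = (|x|^4 + 16|t|^2)^(1/4)`. -/
def kN {n m : ℕ} (p : GrpPt n m) : ℝ := (e2norm p.1 ^ 4 + 16 * e2norm p.2 ^ 2) ^ ((1:ℝ)/4)

/-- Group multiplication of the Métivier group. -/
def gmul {n m : ℕ} (J : Fin m → Matrix (Fin (2*n)) (Fin (2*n)) ℝ) (p q : GrpPt n m) : GrpPt n m :=
  (p.1 + q.1, p.2 + q.2 + fun k => (1/2 : ℝ) * ∑ i, (J k).mulVec p.1 i * q.1 i)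

/-- Horizontal left-invariant vector field `X_j`. -/
def XD {n m : ℕ} (J : Fin m → Matrix (Fin (2*n)) (Fin (2*n)) ℝ)
    {E : Type*} [NormedAddCommGroup E] [NormedSpace ℝ E]
    (j : Fin (2*n)) (f : GrpPt n m → E) (p : GrpPt n m) : E :=
  fderiv ℝ f p (Pi.single j 1, 0)
    + (1/2 : ℝ) • ∑ k, ((J k).mulVec p.1 j) • fderiv ℝ f p (0, Pi.single k 1)

/-- Squared length of the horizontal gradient. -/
def gradSq {n m : ℕ} (J : Fin m → Matrix (Fin (2*n)) (Fin (2*n)) ℝ)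
    (f : GrpPt n m → ℝ) (p : GrpPt n m) : ℝ := ∑ j, (XD J j f p)^2

/-- Sub-Laplacian `L f = -∑ X_j (X_j f)`. -/
def LSub {n m : ℕ} (J : Fin m → Matrix (Fin (2*n)) (Fin (2*n)) ℝ)
    {E : Type*} [NormedAddCommGroup E] [NormedSpace ℝ E]
    (f : GrpPt n m → E) (p : GrpPt n m) : E := - ∑ j, XD J j (XD J j f) p

/-- Weight `w_α = exp (-N^α)`. -/
def wA {n m : ℕ} (α : ℝ) (p : GrpPt n m) : ℝ := Real.exp (-(kN p ^ α))

/-- Potential `V_α = -(1/4) |grad w_α|²/w_α² - (1/2) (L w_α)/w_α`. -/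
def VA {n m : ℕ} (J : Fin m → Matrix (Fin (2*n)) (Fin (2*n)) ℝ) (α : ℝ) (p : GrpPt n m) : ℝ :=
  -(1/4) * gradSq J (wA α) p / (wA α p)^2 - (1/2) * LSub J (wA α) p / wA α p

/-!
On `G*` one computes `∇_H N = (|x|² x + 4 J_t x) / N³`. The cross term `⟨x, J_t x⟩` vanishes
because `J_t` is skew-symmetric, so `|∇_H N|² = (|x|⁶ + 16 |J_t x|²) / N⁶`, whereas
`|x|² / N² = (|x|⁶ + 16 |t|² |x|²) / N⁶`. Everything thus reduces to comparing `|J_t x|` with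
`|t| |x|`. The bilinear map `(t, x) ↦ J_t x` is bounded above by its operator norm; by the Métivier
condition it does not vanish on the compact set `{|t| = |x| = 1}`, which gives the lower bound.
-/

open Matrix WithLp

theorem ContinuousLinearMap.exists_pos_mul_le_norm_apply₂ {𝕜 E F G : Type*} [RCLike 𝕜]
    [NormedAddCommGroup E] [NormedSpace 𝕜 E] [ProperSpace E]
    [NormedAddCommGroup F] [NormedSpace 𝕜 F] [ProperSpace F]
    [NormedAddCommGroup G] [NormedSpace 𝕜 G]
    (B : E →L[𝕜] F →L[𝕜] G) (hB : ∀ x y, x ≠ 0 → y ≠ 0 → B x y ≠ 0) :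
    ∃ c > 0, ∀ x y, c * (‖x‖ * ‖y‖) ≤ ‖B x y‖ := by
  have hK : IsCompact (Metric.sphere (0 : E) 1 ×ˢ Metric.sphere (0 : F) 1) :=
    (isCompact_sphere _ _).prod (isCompact_sphere _ _)
  obtain ⟨c, hc, hcK⟩ := hK.exists_forall_le' (f := fun q => ‖B q.1 q.2‖) (by fun_prop) (a := 0)
    fun q ⟨hx, hy⟩ => norm_pos_iff.2 <|
      hB _ _ (ne_zero_of_mem_sphere one_ne_zero ⟨_, hx⟩) (ne_zero_of_mem_sphere one_ne_zero ⟨_, hy⟩)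
  refine ⟨c, hc, fun x y => ?_⟩
  rcases eq_or_ne x 0 with rfl | hx
  · simp
  rcases eq_or_ne y 0 with rfl | hy
  · simp
  have hunit := hcK ((‖x‖⁻¹ : 𝕜) • x, (‖y‖⁻¹ : 𝕜) • y)
    ⟨by simp [norm_smul_inv_norm hx], by simp [norm_smul_inv_norm hy]⟩
  have hxy : 0 < ‖x‖ * ‖y‖ := by positivity
  simp only [map_smul, _root_.smul_apply, norm_smul, norm_inv, RCLike.norm_ofReal, abs_norm] at hunit
  rw [← le_div_iff₀ hxy]
  calc c ≤ _ := hunit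
    _ = ‖B x y‖ / (‖x‖ * ‖y‖) := by field_simp

lemma dotProduct_mulVec_self_eq_zero {ι R : Type*} [Fintype ι] [CommRing R] [NoZeroDivisors R]
    [CharZero R] {A : Matrix ι ι R} (hA : Aᵀ = -A) (x : ι → R) : x ⬝ᵥ A *ᵥ x = 0 := by
  rw [← self_eq_neg]
  nth_rw 1 [dotProduct_mulVec, ← mulVec_transpose, hA, neg_mulVec, dotProduct_comm, dotProduct_neg]

lemma e2norm_eq_norm_toLp {k : ℕ} (x : Fin k → ℝ) : e2norm x = ‖toLp 2 x‖ := by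
  simp [e2norm, EuclideanSpace.norm_eq]

lemma e2norm_nonneg {k : ℕ} (x : Fin k → ℝ) : 0 ≤ e2norm x :=
  Real.sqrt_nonneg _

lemma e2norm_sq {k : ℕ} (x : Fin k → ℝ) : e2norm x ^ 2 = x ⬝ᵥ x := by
  rw [e2norm, Real.sq_sqrt (by positivity)]
  simp [dotProduct, sq]

lemma e2norm_pos {k : ℕ} {x : Fin k → ℝ} (hx : x ≠ 0) : 0 < e2norm x := by
  simpa [e2norm_eq_norm_toLp] using hx

def pencil {ι : Type*} {m : ℕ} (J : Fin m → Matrix ι ι ℝ) (t : Fin m → ℝ) : Matrix ι ι ℝ :=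
  ∑ k, t k • J k

lemma pencil_transpose {ι : Type*} {m : ℕ} {J : Fin m → Matrix ι ι ℝ} (hJ : ∀ k, (J k)ᵀ = -J k)
    (t : Fin m → ℝ) : (pencil J t)ᵀ = -pencil J t := by
  simp [pencil, transpose_sum, hJ]

lemma pencil_mulVec_apply {ι : Type*} [Fintype ι] {m : ℕ} (J : Fin m → Matrix ι ι ℝ)
    (t : Fin m → ℝ) (x : ι → ℝ) (i : ι) :
    (pencil J t *ᵥ x) i = t ⬝ᵥ fun k => (J k *ᵥ x) i := by
  simp [pencil, sum_mulVec, smul_mulVec, dotProduct, Finset.sum_apply]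

def pencilCLM {ι : Type*} [Fintype ι] [DecidableEq ι] {m : ℕ} (J : Fin m → Matrix ι ι ℝ) :
    EuclideanSpace ℝ (Fin m) →L[ℝ] EuclideanSpace ℝ ι →L[ℝ] EuclideanSpace ℝ ι :=
  ∑ k, (EuclideanSpace.proj k).smulRight (toEuclideanCLM (𝕜 := ℝ) (J k))

lemma pencilCLM_toLp {ι : Type*} [Fintype ι] [DecidableEq ι] {m : ℕ} (J : Fin m → Matrix ι ι ℝ)
    (t : Fin m → ℝ) (x : ι → ℝ) :
    pencilCLM J (toLp 2 t) (toLp 2 x) = toLp 2 (pencil J t *ᵥ x) := by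
  simp [pencilCLM, pencil, sum_mulVec, smul_mulVec]

lemma e2norm_pencil_mulVec_le {d m : ℕ} (J : Fin m → Matrix (Fin d) (Fin d) ℝ)
    (t : Fin m → ℝ) (x : Fin d → ℝ) :
    e2norm (pencil J t *ᵥ x) ≤ ‖pencilCLM J‖ * (e2norm t * e2norm x) := by
  simpa only [e2norm_eq_norm_toLp, pencilCLM_toLp, mul_assoc] using
    (pencilCLM J).le_opNorm₂ (toLp 2 t) (toLp 2 x)

lemma exists_pos_mul_le_e2norm_pencil_mulVec {d m : ℕ} (J : Fin m → Matrix (Fin d) (Fin d) ℝ)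
    (hJ : ∀ t : Fin m → ℝ, t ≠ 0 → IsUnit (pencil J t)) :
    ∃ c > 0, ∀ t x, c * (e2norm t * e2norm x) ≤ e2norm (pencil J t *ᵥ x) := by
  obtain ⟨c, hc, hle⟩ := (pencilCLM J).exists_pos_mul_le_norm_apply₂ fun t x ht hx => by
    rw [← toLp_ofLp 2 t, ← toLp_ofLp 2 x, pencilCLM_toLp, Ne, toLp_eq_zero]
    exact (mulVec_injective_iff_isUnit.2 (hJ _ (by simpa using ht))).ne (by simpa using hx)
      |>.trans_eq (mulVec_zero _)
  refine ⟨c, hc, fun t x => ?_⟩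
  simpa only [e2norm_eq_norm_toLp, pencilCLM_toLp] using hle (toLp 2 t) (toLp 2 x)

lemma kN_pow_four {n m : ℕ} (p : GrpPt n m) : kN p ^ 4 = e2norm p.1 ^ 4 + 16 * e2norm p.2 ^ 2 := by
  rw [kN, ← Real.rpow_natCast, ← Real.rpow_mul (by positivity)]
  norm_num

lemma kN_pos {n m : ℕ} {p : GrpPt n m} (hp : p ≠ 0) : 0 < kN p := by
  refine Real.rpow_pos_of_pos ?_ _
  obtain ⟨x, t⟩ := p
  rcases eq_or_ne x 0 with rfl | hx
  · have ht : t ≠ 0 := by rintro rfl; exact hp rfl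
    have := e2norm_pos ht
    positivity
  · have := e2norm_pos hx
    positivity

lemma fderiv_kN_apply {n m : ℕ} {p : GrpPt n m} (hp : p ≠ 0) (v : Fin (2*n) → ℝ) (s : Fin m → ℝ) :
    fderiv ℝ kN p (v, s) = (e2norm p.1 ^ 2 * (p.1 ⬝ᵥ v) + 8 * (p.2 ⬝ᵥ s)) / kN p ^ 3 := by
  have hx : HasFDerivAt (fun q : GrpPt n m => ‖toLp 2 q.1‖ ^ 2) _ p :=
    ((PiLp.hasFDerivAt_toLp 2 p.1).comp p hasFDerivAt_fst).norm_sq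
  have ht : HasFDerivAt (fun q : GrpPt n m => ‖toLp 2 q.2‖ ^ 2) _ p :=
    ((PiLp.hasFDerivAt_toLp 2 p.2).comp p hasFDerivAt_snd).norm_sq
  have hρ : (e2norm p.1 ^ 2) ^ 2 + 16 * e2norm p.2 ^ 2 = kN p ^ 4 := by
    rw [kN_pow_four]; ring
  have hρ_rpow : (kN p ^ 4) ^ (4⁻¹ - 1 : ℝ) = (kN p ^ 3)⁻¹ := by
    rw [← Real.rpow_natCast, ← Real.rpow_mul (kN_pos hp).le, ← Real.rpow_natCast,
      ← Real.rpow_neg (kN_pos hp).le]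
    norm_num
  have hρ_ne : (‖toLp 2 p.1‖ ^ 2) ^ 2 + 16 * ‖toLp 2 p.2‖ ^ 2 ≠ 0 := by
    simpa [← e2norm_eq_norm_toLp, hρ] using (pow_pos (kN_pos hp) 4).ne'
  have hN : HasFDerivAt kN _ p :=
    (((hx.pow 2).add (ht.const_mul 16)).rpow_const (p := 1 / 4) (Or.inl hρ_ne)).congr_of_eventuallyEq
      (Eventually.of_forall fun q => by simp [kN, e2norm_eq_norm_toLp, ← pow_mul])
  rw [hN.fderiv]
  simp [← e2norm_eq_norm_toLp, EuclideanSpace.inner_toLp_toLp, hρ, hρ_rpow, dotProduct_comm]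
  field_simp
  ring

lemma XD_eq_fderiv_apply {n m : ℕ} (J : Fin m → Matrix (Fin (2*n)) (Fin (2*n)) ℝ)
    {E : Type*} [NormedAddCommGroup E] [NormedSpace ℝ E]
    (j : Fin (2*n)) (f : GrpPt n m → E) (p : GrpPt n m) :
    XD J j f p = fderiv ℝ f p (Pi.single j 1, (1/2 : ℝ) • fun k => (J k *ᵥ p.1) j) := by
  have hdir : ((Pi.single j 1, (1/2 : ℝ) • fun k => (J k *ᵥ p.1) j) : GrpPt n m)
      = (Pi.single j 1, 0) + (1/2 : ℝ) • ∑ k, (J k *ᵥ p.1) j • ((0, Pi.single k 1) : GrpPt n m) := by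
    ext k <;> simp [Prod.fst_sum, Prod.snd_sum, Finset.sum_apply, Pi.single_apply]
  rw [hdir, map_add, map_smul, map_sum]
  simp only [map_smul, XD]

lemma XD_kN {n m : ℕ} (J : Fin m → Matrix (Fin (2*n)) (Fin (2*n)) ℝ) {p : GrpPt n m} (hp : p ≠ 0)
    (j : Fin (2*n)) :
    XD J j kN p = (e2norm p.1 ^ 2 * p.1 j + 4 * (pencil J p.2 *ᵥ p.1) j) / kN p ^ 3 := by
  rw [XD_eq_fderiv_apply, fderiv_kN_apply hp, dotProduct_single_one, dotProduct_smul,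
    ← pencil_mulVec_apply, smul_eq_mul]
  ring

lemma gradSq_kN {n m : ℕ} {J : Fin m → Matrix (Fin (2*n)) (Fin (2*n)) ℝ} (hJ : ∀ k, (J k)ᵀ = -J k)
    {p : GrpPt n m} (hp : p ≠ 0) :
    gradSq J kN p = (e2norm p.1 ^ 6 + 16 * e2norm (pencil J p.2 *ᵥ p.1) ^ 2) / kN p ^ 6 := by
  have hcross := dotProduct_mulVec_self_eq_zero (pencil_transpose hJ p.2) p.1
  simp only [gradSq, XD_kN J hp, div_pow, ← Finset.sum_div, ← pow_mul]
  congr 1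
  rw [show e2norm p.1 ^ 6 = (e2norm p.1 ^ 2) ^ 3 by ring, e2norm_sq, e2norm_sq]
  set x := p.1
  set y := pencil J p.2 *ᵥ x
  calc ∑ i, ((x ⬝ᵥ x) * x i + 4 * y i) ^ 2
      = ∑ i, ((x ⬝ᵥ x) ^ 2 * (x i * x i) + 8 * (x ⬝ᵥ x) * (x i * y i) + 16 * (y i * y i)) :=
        Finset.sum_congr rfl fun _ _ => by ring
    _ = (x ⬝ᵥ x) ^ 2 * (x ⬝ᵥ x) + 8 * (x ⬝ᵥ x) * (x ⬝ᵥ y) + 16 * (y ⬝ᵥ y) := by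
        simp only [Finset.sum_add_distrib, ← Finset.mul_sum, dotProduct]
    _ = (x ⬝ᵥ x) ^ 3 + 16 * (y ⬝ᵥ y) := by rw [hcross]; ring

lemma e2norm_sq_div_kN_sq {n m : ℕ} {p : GrpPt n m} (hp : p ≠ 0) :
    e2norm p.1 ^ 2 / kN p ^ 2
      = (e2norm p.1 ^ 6 + 16 * (e2norm p.2 * e2norm p.1) ^ 2) / kN p ^ 6 := by
  have hN := kN_pos hp
  rw [div_eq_div_iff (by positivity) (by positivity), show kN p ^ 6 = kN p ^ 4 * kN p ^ 2 by ring,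
    kN_pow_four]
  ring

theorem gradSq_kaplan_bounds_general (n m : ℕ)
    (J : Fin m → Matrix (Fin (2*n)) (Fin (2*n)) ℝ)
    (hskew : ∀ k, (J k).transpose = -(J k))
    (hMet : ∀ t : Fin m → ℝ, t ≠ 0 → IsUnit (∑ k, t k • J k)) :
    ∃ c C : ℝ, 0 < c ∧ c ≤ 1 ∧ 1 ≤ C ∧ ∀ p : GrpPt n m, p ≠ 0 →
      c * e2norm p.1 ^ 2 / kN p ^ 2 ≤ gradSq J kN p ∧
      gradSq J kN p ≤ C * e2norm p.1 ^ 2 / kN p ^ 2 := by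
  obtain ⟨c₀, hc₀, hlow⟩ := exists_pos_mul_le_e2norm_pencil_mulVec J hMet
  set C₀ := ‖pencilCLM J‖
  refine ⟨min (c₀ ^ 2) 1, max (C₀ ^ 2) 1, by positivity, min_le_right _ _, le_max_right _ _,
    fun p hp => ?_⟩
  have hN : 0 < kN p ^ 6 := pow_pos (kN_pos hp) 6
  set b := e2norm p.2 * e2norm p.1
  have hb : 0 ≤ b := mul_nonneg (e2norm_nonneg _) (e2norm_nonneg _)
  have hlow' : c₀ ^ 2 * b ^ 2 ≤ e2norm (pencil J p.2 *ᵥ p.1) ^ 2 := by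
    rw [← mul_pow]; exact pow_le_pow_left₀ (mul_nonneg hc₀.le hb) (hlow _ _) 2
  have hup : e2norm (pencil J p.2 *ᵥ p.1) ^ 2 ≤ C₀ ^ 2 * b ^ 2 := by
    rw [← mul_pow]; exact pow_le_pow_left₀ (e2norm_nonneg _) (e2norm_pencil_mulVec_le J _ _) 2
  have ha : 0 ≤ e2norm p.1 ^ 6 := pow_nonneg (e2norm_nonneg _) 6
  rw [mul_div_assoc, mul_div_assoc, e2norm_sq_div_kN_sq hp, gradSq_kN hskew hp, ← mul_div_assoc,
    ← mul_div_assoc]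
  constructor
  · refine div_le_div_of_nonneg_right ?_ hN.le
    nlinarith [mul_nonneg (sub_nonneg.2 (min_le_right (c₀ ^ 2) 1)) ha,
      mul_nonneg (sub_nonneg.2 (min_le_left (c₀ ^ 2) 1)) (sq_nonneg b)]
  · refine div_le_div_of_nonneg_right ?_ hN.le
    nlinarith [mul_nonneg (sub_nonneg.2 (le_max_right (C₀ ^ 2) 1)) ha,
      mul_nonneg (sub_nonneg.2 (le_max_left (C₀ ^ 2) 1)) (sq_nonneg b)]

/-- Two-sided bound for the squared horizontal gradient of the Kaplan norm on `G*`. -/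
theorem gradSq_kaplan_bounds (n m : ℕ) (hn : 1 ≤ n) (hm : 1 ≤ m)
    (J : Fin m → Matrix (Fin (2*n)) (Fin (2*n)) ℝ)
    (hskew : ∀ k, (J k).transpose = -(J k))
    (hMet : ∀ t : Fin m → ℝ, t ≠ 0 → IsUnit (∑ k, t k • J k)) :
    ∃ c C : ℝ, 0 < c ∧ c ≤ 1 ∧ 1 ≤ C ∧ ∀ p : GrpPt n m, p ≠ 0 →
      c * e2norm p.1 ^ 2 / kN p ^ 2 ≤ gradSq J kN p ∧
      gradSq J kN p ≤ C * e2norm p.1 ^ 2 / kN p ^ 2 :=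
  gradSq_kaplan_bounds_general n m J hskew hMet

end
end

section
/- For every α ≥ 2 the potential V_α is bounded from below on G*, i.e. there exists a constant K ∈ ℝ such that V_α(x,t) ≥ K for all (x,t) ∈ G*. -/
open MeasureTheory Filter
open scoped BigOperators ENNReal NNReal

noncomputable section

/-!
Write `ρ = N⁴ = |x|⁴ + 16|t|²`, which unlike `N` is a polynomial, and `w_α = h ∘ ρ` with
`h(s) = exp(-s^a)`, `a = α/4`. The chain rule for the horizontal fields gives
`V_α = (a²/4) ρ^{2a-2} |∇_H ρ|² - (a(a-1)/2) ρ^{a-2} |∇_H ρ|² + (a/2) ρ^{a-1} Lρ`,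
and skew-symmetry gives `|∇_H ρ|² = 16|x|⁶ + 256|J_t x|²` and
`Lρ = -8((n+1)|x|² + Σ_k |J_k x|²)`. By the Métivier condition and compactness of the unit
spheres, `|J_t x| ≥ c|t||x|`, so `|∇_H ρ|²` is comparable to `|x|² ρ`, while `Lρ ≥ -L|x|²`.
Hence `V_α ≥ |x|² ρ^{a-1} (c' ρ^a - D)`. This is nonnegative for large `ρ`, and for small `ρ`
the factor `|x|² ρ^{a-1} ≤ ρ^{a-1/2}` is bounded because `a ≥ 1/2`.
-/

open Matrix Topology

section DotProductCalculus

variable {G ι : Type*} [NormedAddCommGroup G] [NormedSpace ℝ G] [Fintype ι] {f g : G → ι → ℝ}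
  {x : G}

@[fun_prop]
theorem DifferentiableAt.dotProduct (hf : DifferentiableAt ℝ f x) (hg : DifferentiableAt ℝ g x) :
    DifferentiableAt ℝ (fun y => f y ⬝ᵥ g y) x := by
  unfold _root_.dotProduct
  fun_prop

@[fun_prop]
theorem Differentiable.dotProduct (hf : Differentiable ℝ f) (hg : Differentiable ℝ g) :
    Differentiable ℝ (fun y => f y ⬝ᵥ g y) :=
  fun x => (hf x).dotProduct (hg x)

theorem fderiv_dotProduct_apply (hf : DifferentiableAt ℝ f x) (hg : DifferentiableAt ℝ g x)
    (v : G) :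
    fderiv ℝ (fun y => f y ⬝ᵥ g y) x v = f x ⬝ᵥ fderiv ℝ g x v + fderiv ℝ f x v ⬝ᵥ g x := by
  unfold _root_.dotProduct
  simp (disch := fun_prop) [fderiv_fun_sum, fderiv_fun_mul, fderiv_apply hf, fderiv_apply hg,
    Finset.sum_add_distrib, mul_comm]

@[fun_prop]
theorem DifferentiableAt.mulVec {κ : Type*} [Fintype κ] (A : Matrix κ ι ℝ)
    (hf : DifferentiableAt ℝ f x) : DifferentiableAt ℝ (fun y => A *ᵥ f y) x :=
  ((Matrix.mulVecLin A).toContinuousLinearMap.differentiableAt).comp x hf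

@[fun_prop]
theorem Differentiable.mulVec {κ : Type*} [Fintype κ] (A : Matrix κ ι ℝ)
    (hf : Differentiable ℝ f) : Differentiable ℝ (fun y => A *ᵥ f y) :=
  fun x => (hf x).mulVec A

theorem fderiv_mulVec_apply {κ : Type*} [Fintype κ] (A : Matrix κ ι ℝ)
    (hf : DifferentiableAt ℝ f x) (v : G) :
    fderiv ℝ (fun y => A *ᵥ f y) x v = A *ᵥ fderiv ℝ f x v := by
  change fderiv ℝ ((Matrix.mulVecLin A).toContinuousLinearMap ∘ f) x v = _
  rw [((Matrix.mulVecLin A).toContinuousLinearMap.hasFDerivAt.comp x hf.hasFDerivAt).fderiv]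
  rfl

end DotProductCalculus

theorem ContinuousLinearMap.exists_pos_mul_norm_mul_norm_le {E F G : Type*}
    [NormedAddCommGroup E] [NormedSpace ℝ E] [FiniteDimensional ℝ E]
    [NormedAddCommGroup F] [NormedSpace ℝ F] [FiniteDimensional ℝ F]
    [NormedAddCommGroup G] [NormedSpace ℝ G]
    (B : E →L[ℝ] F →L[ℝ] G) (hB : ∀ x y, x ≠ 0 → y ≠ 0 → B x y ≠ 0) :
    ∃ c > 0, ∀ x y, c * (‖x‖ * ‖y‖) ≤ ‖B x y‖ := by
  obtain ⟨c, hc, hcS⟩ := ((isCompact_sphere (0 : E) 1).prod (isCompact_sphere (0 : F) 1))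
    |>.exists_forall_le' B.continuous₂.norm.continuousOn (a := 0) fun u hu => by
      simp only [Set.mem_prod, mem_sphere_zero_iff_norm] at hu
      refine norm_pos_iff.2 (hB _ _ ?_ ?_) <;> rw [← norm_ne_zero_iff] <;> simp [hu.1, hu.2]
  refine ⟨c, hc, fun x y => ?_⟩
  rcases eq_or_ne x 0 with rfl | hx
  · simp
  rcases eq_or_ne y 0 with rfl | hy
  · simp
  have hsphere := hcS (‖x‖⁻¹ • x, ‖y‖⁻¹ • y) ⟨by simp [norm_smul, hx], by simp [norm_smul, hy]⟩
  have hxy : ‖B x y‖ = ‖x‖ * ‖y‖ * ‖B (‖x‖⁻¹ • x) (‖y‖⁻¹ • y)‖ := by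
    simp [norm_smul]
    field_simp
  rw [hxy, mul_comm c]
  exact mul_le_mul_of_nonneg_left hsphere (by positivity)

theorem exists_le_mul_rpow_mul_sub {a c : ℝ} (ha : 1 / 2 ≤ a) (hc : 0 < c) (D : ℝ) :
    ∃ C, ∀ s > 0, ∀ y, 0 ≤ y → y ^ 2 ≤ s → C ≤ y * s ^ (a - 1) * (c * s ^ a - D) := by
  set D' := max D 0
  have hD' : 0 ≤ D' := le_max_right _ _
  refine ⟨-(D' * max 1 (D' / c)), fun s hs y hy hys => ?_⟩
  have hq : 0 ≤ y * s ^ (a - 1) := by positivity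
  calc -(D' * max 1 (D' / c)) ≤ y * s ^ (a - 1) * (c * s ^ a - D') := ?_
    _ ≤ y * s ^ (a - 1) * (c * s ^ a - D) := by gcongr; exact le_max_left _ _
  rcases le_or_gt D' (c * s ^ a) with hlarge | hsmall
  · linarith [mul_nonneg hq (sub_nonneg.2 hlarge),
      (by positivity : 0 ≤ D' * max 1 (D' / c))]
  have hq_le : y * s ^ (a - 1) ≤ max 1 (D' / c) :=
    calc y * s ^ (a - 1) ≤ s ^ (1 / 2 : ℝ) * s ^ (a - 1) := by
          gcongr
          rw [← Real.sqrt_eq_rpow]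
          exact Real.le_sqrt_of_sq_le hys
      _ = s ^ (a - 1 / 2) := by rw [← Real.rpow_add hs]; ring_nf
      _ ≤ max 1 (s ^ a) := by
          rcases le_or_gt s 1 with hs1 | hs1
          · exact le_max_of_le_left (Real.rpow_le_one hs.le hs1 (by linarith))
          · exact le_max_of_le_right (Real.rpow_le_rpow_of_exponent_le hs1.le (by linarith))
      _ ≤ max 1 (D' / c) := by
          gcongr
          rw [le_div_iff₀ hc]
          linarith
  nlinarith [mul_le_mul_of_nonneg_left hq_le hD', mul_nonneg hq (by positivity : 0 ≤ c * s ^ a)]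

theorem hasDerivAt_exp_neg_rpow {a s : ℝ} (hs : 0 < s) :
    HasDerivAt (fun s => Real.exp (-s ^ a)) (-(a * s ^ (a - 1)) * Real.exp (-s ^ a)) s := by
  simpa [mul_comm] using ((Real.hasDerivAt_rpow_const (p := a) (Or.inl hs.ne')).neg).exp

theorem hasDerivAt_deriv_exp_neg_rpow {a s : ℝ} (hs : 0 < s) :
    HasDerivAt (fun s => -(a * s ^ (a - 1)) * Real.exp (-s ^ a))
      (-(a * ((a - 1) * s ^ (a - 2))) * Real.exp (-s ^ a)
        + -(a * s ^ (a - 1)) * (-(a * s ^ (a - 1)) * Real.exp (-s ^ a))) s := by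
  have h := ((Real.hasDerivAt_rpow_const (p := a - 1) (Or.inl hs.ne')).const_mul a).neg
  rw [show a - 1 - 1 = a - 2 by ring] at h
  exact h.mul (hasDerivAt_exp_neg_rpow hs)

section SkewSymmetric

variable {R ι : Type*} [CommRing R] [NoZeroDivisors R] [CharZero R] [Fintype ι]
  {A : Matrix ι ι R}

theorem Matrix.dotProduct_mulVec_self_eq_zero_of_transpose_eq_neg (hA : Aᵀ = -A) (x : ι → R) :
    x ⬝ᵥ A *ᵥ x = 0 :=
  CharZero.eq_neg_self_iff.1 <| by
    conv_lhs => rw [dotProduct_mulVec, ← mulVec_transpose, hA, neg_mulVec, dotProduct_comm,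
      dotProduct_neg]

theorem Matrix.trace_eq_zero_of_transpose_eq_neg (hA : Aᵀ = -A) : A.trace = 0 :=
  CharZero.eq_neg_self_iff.1 <| by rw [← trace_neg, ← hA, trace_transpose]

end SkewSymmetric

namespace Metivier

variable {n m : ℕ} {J : Fin m → Matrix (Fin (2*n)) (Fin (2*n)) ℝ}

section HorizontalFields

variable (J) in
def horizVec (j : Fin (2*n)) (p : GrpPt n m) : GrpPt n m :=
  (Pi.single j 1, (1 / 2 : ℝ) • fun k => (J k *ᵥ p.1) j)

variable {E : Type*} [NormedAddCommGroup E] [NormedSpace ℝ E] {j : Fin (2*n)}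
  {p : GrpPt n m}

theorem XD_eq_fderiv (f : GrpPt n m → E) : XD J j f p = fderiv ℝ f p (horizVec J j p) := by
  have : horizVec J j p = (Pi.single j 1, 0) +
      (1 / 2 : ℝ) • ∑ k, (J k *ᵥ p.1) j • ((0 : Fin (2*n) → ℝ), (Pi.single k 1 : Fin m → ℝ)) := by
    ext i <;> simp [horizVec, Prod.fst_sum, Prod.snd_sum, Finset.sum_apply, Pi.single_apply]
  simp only [XD, this, map_add, map_smul, map_sum]

theorem XD_congr {f g : GrpPt n m → E} (h : f =ᶠ[𝓝 p] g) : XD J j f p = XD J j g p := by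
  rw [XD_eq_fderiv, XD_eq_fderiv, h.fderiv_eq]

theorem XD_comp {f : GrpPt n m → ℝ} {h : ℝ → ℝ} {h' : ℝ} (hh : HasDerivAt h h' (f p))
    (hf : DifferentiableAt ℝ f p) : XD J j (fun q => h (f q)) p = h' * XD J j f p := by
  rw [XD_eq_fderiv, XD_eq_fderiv, show (fun q => h (f q)) = h ∘ f from rfl,
    (hh.comp_hasFDerivAt p hf.hasFDerivAt).fderiv]
  simp

theorem XD_mul {f g : GrpPt n m → ℝ} (hf : DifferentiableAt ℝ f p) (hg : DifferentiableAt ℝ g p) :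
    XD J j (fun q => f q * g q) p = f p * XD J j g p + g p * XD J j f p := by
  simp [XD_eq_fderiv, fderiv_fun_mul hf hg]

theorem XD_XD_comp {f : GrpPt n m → ℝ} {h h' : ℝ → ℝ} {h'' : ℝ}
    (hh : ∀ᶠ s in 𝓝 (f p), HasDerivAt h (h' s) s) (hh' : HasDerivAt h' h'' (f p))
    (hf : ∀ᶠ q in 𝓝 p, DifferentiableAt ℝ f q) (hXf : DifferentiableAt ℝ (XD J j f) p) :
    XD J j (XD J j (fun q => h (f q))) p =
      h'' * XD J j f p ^ 2 + h' (f p) * XD J j (XD J j f) p := by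
  have hfp := hf.self_of_nhds
  have hXcomp : XD J j (fun q => h (f q)) =ᶠ[𝓝 p] fun q => h' (f q) * XD J j f q := by
    filter_upwards [hf, hfp.continuousAt.eventually hh] with q hfq hhq
    exact XD_comp hhq hfq
  have hh'f : DifferentiableAt ℝ (fun q => h' (f q)) p := hh'.differentiableAt.comp p hfp
  rw [XD_congr hXcomp, XD_mul hh'f hXf, XD_comp hh' hfp]
  ring

theorem gradSq_comp {f : GrpPt n m → ℝ} {h : ℝ → ℝ} {h' : ℝ} (hh : HasDerivAt h h' (f p))
    (hf : DifferentiableAt ℝ f p) : gradSq J (fun q => h (f q)) p = h' ^ 2 * gradSq J f p := by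
  simp only [gradSq, XD_comp hh hf, Finset.mul_sum, mul_pow]

theorem LSub_comp {f : GrpPt n m → ℝ} {h h' : ℝ → ℝ} {h'' : ℝ}
    (hh : ∀ᶠ s in 𝓝 (f p), HasDerivAt h (h' s) s) (hh' : HasDerivAt h' h'' (f p))
    (hf : ∀ᶠ q in 𝓝 p, DifferentiableAt ℝ f q) (hXf : ∀ j, DifferentiableAt ℝ (XD J j f) p) :
    LSub J (fun q => h (f q)) p = h' (f p) * LSub J f p - h'' * gradSq J f p := by
  simp only [LSub, gradSq, XD_XD_comp hh hh' hf (hXf _), Finset.sum_add_distrib, ← Finset.mul_sum]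
  ring

end HorizontalFields

section KaplanNorm

theorem e2norm_nonneg {k : ℕ} (x : Fin k → ℝ) : 0 ≤ e2norm x := Real.sqrt_nonneg _

theorem e2norm_sq {k : ℕ} (x : Fin k → ℝ) : e2norm x ^ 2 = x ⬝ᵥ x := by
  rw [e2norm, Real.sq_sqrt (Finset.sum_nonneg fun i _ => sq_nonneg _)]
  simp [dotProduct, sq]

theorem e2norm_eq_norm {k : ℕ} (x : Fin k → ℝ) : e2norm x = ‖WithLp.toLp 2 x‖ := by
  simp [e2norm, EuclideanSpace.norm_eq]

def kN4 (p : GrpPt n m) : ℝ := e2norm p.1 ^ 4 + 16 * e2norm p.2 ^ 2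

theorem kN4_eq_dotProduct :
    kN4 (n := n) (m := m) = fun p => (p.1 ⬝ᵥ p.1) ^ 2 + 16 * (p.2 ⬝ᵥ p.2) := by
  funext p
  rw [kN4, ← e2norm_sq, ← e2norm_sq]
  ring

theorem differentiable_kN4 : Differentiable ℝ (kN4 (n := n) (m := m)) := by
  rw [kN4_eq_dotProduct]
  fun_prop

theorem kN4_pos {p : GrpPt n m} (hp : p ≠ 0) : 0 < kN4 p := by
  have h : e2norm p.1 ≠ 0 ∨ e2norm p.2 ≠ 0 := by
    by_contra! h
    simp only [e2norm_eq_norm, norm_eq_zero, WithLp.toLp_eq_zero] at h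
    exact hp (Prod.ext h.1 h.2)
  rcases h with h | h <;> unfold kN4 <;> positivity

theorem e2norm_sq_sq_le_kN4 (p : GrpPt n m) : (e2norm p.1 ^ 2) ^ 2 ≤ kN4 p := by
  rw [kN4, ← pow_mul, show 2 * 2 = 4 from rfl]
  linarith [sq_nonneg (e2norm p.2)]

theorem wA_eq (α : ℝ) : wA (n := n) (m := m) α = fun p => Real.exp (-(kN4 p ^ (α / 4))) := by
  funext p
  rw [wA, kN, ← kN4, ← Real.rpow_mul (by unfold kN4; positivity)]
  ring_nf

variable (J) in
def Jt (t : Fin m → ℝ) : Matrix (Fin (2*n)) (Fin (2*n)) ℝ := ∑ k, t k • J k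

theorem Jt_mulVec_apply (t : Fin m → ℝ) (x : Fin (2*n) → ℝ) (j : Fin (2*n)) :
    (Jt J t *ᵥ x) j = ∑ k, t k * (J k *ᵥ x) j := by
  simp [Jt, Matrix.sum_mulVec, Matrix.smul_mulVec, Finset.sum_apply]

theorem Jt_transpose (hskew : ∀ k, (J k)ᵀ = -J k) (t : Fin m → ℝ) : (Jt J t)ᵀ = -Jt J t := by
  simp [Jt, Matrix.transpose_sum, hskew]

theorem XD_kN4 (j : Fin (2*n)) :
    XD J j kN4 = fun p => 4 * (p.1 ⬝ᵥ p.1) * p.1 j + 16 * (Jt J p.2 *ᵥ p.1) j := by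
  funext p
  rw [XD_eq_fderiv, kN4_eq_dotProduct, Jt_mulVec_apply]
  simp (disch := fun_prop) [fderiv_fun_add, fderiv_fun_pow, fderiv_const_mul,
    fderiv_dotProduct_apply, fderiv_fst, fderiv_snd, horizVec, dotProduct_comm _ p.2]
  simp only [dotProduct]
  ring

theorem XD_XD_kN4 (j : Fin (2*n)) (p : GrpPt n m) :
    XD J j (XD J j kN4) p = 8 * p.1 j ^ 2 + 4 * (p.1 ⬝ᵥ p.1) + 8 * ∑ k, (J k *ᵥ p.1) j ^ 2
      + 16 * ∑ k, p.2 k * J k j j := by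
  simp only [XD_kN4, XD_eq_fderiv, Jt_mulVec_apply]
  simp (disch := fun_prop) [fderiv_fun_add, fderiv_const_mul, fderiv_fun_mul, fderiv_fun_sum,
    fderiv_dotProduct_apply, fderiv_mulVec_apply, fderiv_fst, fderiv_snd, fderiv_apply, horizVec]
  simp only [Finset.sum_add_distrib, mul_left_comm _ (2⁻¹ : ℝ), ← Finset.mul_sum, ← sq]
  ring

theorem gradSq_kN4 (hskew : ∀ k, (J k)ᵀ = -J k) (p : GrpPt n m) :
    gradSq J kN4 p = 16 * e2norm p.1 ^ 6 + 256 * e2norm (Jt J p.2 *ᵥ p.1) ^ 2 := by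
  set v := (4 * (p.1 ⬝ᵥ p.1)) • p.1 + (16 : ℝ) • (Jt J p.2 *ᵥ p.1)
  have hv : gradSq J kN4 p = v ⬝ᵥ v := by
    simp [gradSq, XD_kN4, v, dotProduct, sq]
  have h0 : p.1 ⬝ᵥ Jt J p.2 *ᵥ p.1 = 0 :=
    dotProduct_mulVec_self_eq_zero_of_transpose_eq_neg (Jt_transpose hskew p.2) _
  rw [hv, show e2norm p.1 ^ 6 = (e2norm p.1 ^ 2) ^ 3 by ring, e2norm_sq, e2norm_sq]
  simp only [v, add_dotProduct, dotProduct_add, smul_dotProduct, dotProduct_smul, h0,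
    dotProduct_comm _ p.1, smul_eq_mul]
  ring

theorem LSub_kN4 (htr : ∀ k, (J k).trace = 0) (p : GrpPt n m) :
    LSub J kN4 p = -(8 * (n + 1) * e2norm p.1 ^ 2 + 8 * ∑ k, e2norm (J k *ᵥ p.1) ^ 2) := by
  have htr' : ∑ j, ∑ k, p.2 k * J k j j = 0 := by
    simp only [Matrix.trace, Matrix.diag] at htr
    simp [Finset.sum_comm (γ := Fin (2*n)), ← Finset.mul_sum, htr]
  simp only [LSub, XD_XD_kN4, Finset.sum_add_distrib, ← Finset.mul_sum, htr', e2norm_sq]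
  rw [Finset.sum_comm (f := fun j k => (J k *ᵥ p.1) j ^ 2)]
  simp [dotProduct, sq]
  ring

theorem differentiable_XD_kN4 (j : Fin (2*n)) : Differentiable ℝ (XD J j kN4) := by
  simp only [XD_kN4, Jt_mulVec_apply]
  fun_prop

end KaplanNorm

theorem VA_eq {p : GrpPt n m} (hp : p ≠ 0) (α : ℝ) :
    VA J α p = (α / 4) ^ 2 / 4 * (kN4 p ^ (α / 4 - 1)) ^ 2 * gradSq J kN4 p
      - α / 4 * (α / 4 - 1) / 2 * kN4 p ^ (α / 4 - 2) * gradSq J kN4 p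
      + α / 4 / 2 * kN4 p ^ (α / 4 - 1) * LSub J kN4 p := by
  have hs := kN4_pos hp
  have hh : ∀ᶠ s in 𝓝 (kN4 p), HasDerivAt (fun s => Real.exp (-s ^ (α / 4)))
      (-(α / 4 * s ^ (α / 4 - 1)) * Real.exp (-s ^ (α / 4))) s :=
    (lt_mem_nhds hs).mono fun s hs => hasDerivAt_exp_neg_rpow hs
  rw [VA, wA_eq, gradSq_comp (hasDerivAt_exp_neg_rpow hs) (differentiable_kN4 p),
    LSub_comp hh (hasDerivAt_deriv_exp_neg_rpow hs) (.of_forall differentiable_kN4)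
      fun j => differentiable_XD_kN4 j p]
  field_simp
  ring

section Estimates

variable (J) in
def metivierForm :
    EuclideanSpace ℝ (Fin m) →L[ℝ]
      EuclideanSpace ℝ (Fin (2*n)) →L[ℝ] EuclideanSpace ℝ (Fin (2*n)) :=
  LinearMap.toContinuousLinearMap
    ((toEuclideanCLM (n := Fin (2*n)) (𝕜 := ℝ)).toAlgEquiv.toLinearMap ∘ₗ
      Fintype.linearCombination ℝ J ∘ₗ (WithLp.linearEquiv 2 ℝ (Fin m → ℝ)).toLinearMap)

theorem metivierForm_toLp (t : Fin m → ℝ) (x : Fin (2*n) → ℝ) :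
    metivierForm J (WithLp.toLp 2 t) (WithLp.toLp 2 x) = WithLp.toLp 2 (Jt J t *ᵥ x) := by
  simp [metivierForm, Jt, Fintype.linearCombination_apply, Matrix.sum_mulVec, Matrix.smul_mulVec,
    WithLp.toLp_sum]

theorem e2norm_Jt_mulVec_le (t : Fin m → ℝ) (x : Fin (2*n) → ℝ) :
    e2norm (Jt J t *ᵥ x) ≤ ‖metivierForm J‖ * e2norm t * e2norm x := by
  simpa only [e2norm_eq_norm, metivierForm_toLp] using
    (metivierForm J).le_opNorm₂ (WithLp.toLp 2 t) (WithLp.toLp 2 x)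

theorem e2norm_mulVec_le (k : Fin m) (x : Fin (2*n) → ℝ) :
    e2norm (J k *ᵥ x) ≤ ‖metivierForm J‖ * e2norm x := by
  have h := e2norm_Jt_mulVec_le (J := J) (Pi.single k 1) x
  simpa [Jt, Pi.single_apply, e2norm_eq_norm, PiLp.norm_single] using h

theorem exists_pos_mul_le_e2norm_Jt_mulVec (hMet : ∀ t : Fin m → ℝ, t ≠ 0 → IsUnit (Jt J t)) :
    ∃ c > 0, ∀ t x, c * (e2norm t * e2norm x) ≤ e2norm (Jt J t *ᵥ x) := by
  obtain ⟨c, hc, h⟩ := (metivierForm J).exists_pos_mul_norm_mul_norm_le fun u v hu hv => by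
    rw [← WithLp.toLp_ofLp (p := 2) u, ← WithLp.toLp_ofLp (p := 2) v, metivierForm_toLp, ne_eq,
      WithLp.toLp_eq_zero, ← mulVec_zero (Jt J u.ofLp)]
    refine fun h0 => hv ?_
    simpa using Matrix.mulVec_injective_iff_isUnit.2 (hMet _ (by simpa using hu)) h0
  refine ⟨c, hc, fun t x => ?_⟩
  simpa [e2norm_eq_norm, metivierForm_toLp] using h (.toLp 2 t) (.toLp 2 x)

theorem exists_pos_mul_le_gradSq_kN4 (hskew : ∀ k, (J k)ᵀ = -J k)
    (hMet : ∀ t : Fin m → ℝ, t ≠ 0 → IsUnit (Jt J t)) :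
    ∃ κ > 0, ∀ p : GrpPt n m, κ * (e2norm p.1 ^ 2 * kN4 p) ≤ gradSq J kN4 p := by
  obtain ⟨c, hc, hlow⟩ := exists_pos_mul_le_e2norm_Jt_mulVec hMet
  refine ⟨16 * min 1 (c ^ 2), by positivity, fun p => ?_⟩
  have hJt : (c * (e2norm p.2 * e2norm p.1)) ^ 2 ≤ e2norm (Jt J p.2 *ᵥ p.1) ^ 2 :=
    pow_le_pow_left₀ (mul_nonneg hc.le (mul_nonneg (e2norm_nonneg _) (e2norm_nonneg _)))
      (hlow p.2 p.1) 2
  have h1 := mul_le_mul_of_nonneg_right (min_le_left 1 (c ^ 2)) (by positivity : 0 ≤ e2norm p.1 ^ 6)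
  have h2 := mul_le_mul_of_nonneg_right (min_le_right 1 (c ^ 2))
    (by positivity : 0 ≤ e2norm p.2 ^ 2 * e2norm p.1 ^ 2)
  rw [gradSq_kN4 hskew, kN4]
  nlinarith

theorem gradSq_kN4_le (hskew : ∀ k, (J k)ᵀ = -J k) (p : GrpPt n m) :
    gradSq J kN4 p ≤ 16 * max 1 (‖metivierForm J‖ ^ 2) * (e2norm p.1 ^ 2 * kN4 p) := by
  have hJt : e2norm (Jt J p.2 *ᵥ p.1) ^ 2 ≤ (‖metivierForm J‖ * e2norm p.2 * e2norm p.1) ^ 2 :=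
    pow_le_pow_left₀ (e2norm_nonneg _) (e2norm_Jt_mulVec_le p.2 p.1) 2
  have h1 := mul_le_mul_of_nonneg_right (le_max_left 1 (‖metivierForm J‖ ^ 2))
    (by positivity : 0 ≤ e2norm p.1 ^ 6)
  have h2 := mul_le_mul_of_nonneg_right (le_max_right 1 (‖metivierForm J‖ ^ 2))
    (by positivity : 0 ≤ e2norm p.2 ^ 2 * e2norm p.1 ^ 2)
  rw [gradSq_kN4 hskew, kN4]
  nlinarith

theorem le_LSub_kN4 (hskew : ∀ k, (J k)ᵀ = -J k) (p : GrpPt n m) :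
    -((8 * (n + 1) + 8 * m * ‖metivierForm J‖ ^ 2) * e2norm p.1 ^ 2) ≤ LSub J kN4 p := by
  have h : ∑ k, e2norm (J k *ᵥ p.1) ^ 2 ≤ m * (‖metivierForm J‖ ^ 2 * e2norm p.1 ^ 2) := by
    simpa [mul_pow] using Finset.sum_le_sum fun k (_ : k ∈ Finset.univ) =>
      pow_le_pow_left₀ (e2norm_nonneg _) (e2norm_mulVec_le (J := J) k p.1) 2
  rw [LSub_kN4 fun k => trace_eq_zero_of_transpose_eq_neg (hskew k)]
  nlinarith

theorem le_VA {p : GrpPt n m} (hp : p ≠ 0) {α κ K L : ℝ} (hα : 0 < α) (hκ : 0 ≤ κ)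
    (hG : κ * (e2norm p.1 ^ 2 * kN4 p) ≤ gradSq J kN4 p)
    (hGK : gradSq J kN4 p ≤ K * (e2norm p.1 ^ 2 * kN4 p))
    (hL : -(L * e2norm p.1 ^ 2) ≤ LSub J kN4 p) :
    e2norm p.1 ^ 2 * kN4 p ^ (α / 4 - 1) *
        ((α / 4) ^ 2 * κ / 4 * kN4 p ^ (α / 4) - (α / 4 * |α / 4 - 1| * K + α / 4 * L) / 2)
      ≤ VA J α p := by
  rw [VA_eq hp]
  set a := α / 4
  set s := kN4 p
  set y := e2norm p.1 ^ 2
  set q := s ^ (a - 1)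
  have hs : 0 < s := kN4_pos hp
  have ha : 0 < a := by positivity
  have hy : 0 ≤ y := by positivity
  have hq : 0 < q := by positivity
  have hsa : s ^ a = q * s := by rw [← Real.rpow_add_one hs.ne']; ring_nf
  have hsa2 : s ^ (a - 2) = q / s := by
    rw [eq_div_iff hs.ne', ← Real.rpow_add_one hs.ne', show a - 2 + 1 = a - 1 by ring]
  set G := gradSq J kN4 p
  have hG0 : 0 ≤ G := le_trans (by positivity) hG
  have hlead : a ^ 2 / 4 * q ^ 2 * (κ * (y * s)) ≤ a ^ 2 / 4 * q ^ 2 * G :=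
    mul_le_mul_of_nonneg_left hG (by positivity)
  have hmid : a / 2 * (q / s) * ((a - 1) * G) ≤ a / 2 * (q / s) * (|a - 1| * (K * (y * s))) :=
    mul_le_mul_of_nonneg_left ((mul_le_mul_of_nonneg_right (le_abs_self _) hG0).trans
      (mul_le_mul_of_nonneg_left hGK (abs_nonneg _))) (by positivity)
  have hlap : a / 2 * q * -(L * y) ≤ a / 2 * q * LSub J kN4 p :=
    mul_le_mul_of_nonneg_left hL (by positivity)
  have hmid_eq : a / 2 * (q / s) * (|a - 1| * (K * (y * s))) = a / 2 * q * (|a - 1| * K * y) := by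
    field_simp
  rw [hsa, hsa2]
  linarith

end Estimates

end Metivier

open Metivier

theorem potential_bounded_below_general (n m : ℕ)
    (J : Fin m → Matrix (Fin (2*n)) (Fin (2*n)) ℝ)
    (hskew : ∀ k, (J k).transpose = -(J k))
    (hMet : ∀ t : Fin m → ℝ, t ≠ 0 → IsUnit (∑ k, t k • J k)) :
    ∀ α : ℝ, 2 ≤ α → ∃ K : ℝ, ∀ p : GrpPt n m, p ≠ 0 → K ≤ VA J α p := by
  intro α hα
  obtain ⟨κ, hκ, hG⟩ := exists_pos_mul_le_gradSq_kN4 hskew hMet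
  obtain ⟨C, hC⟩ := exists_le_mul_rpow_mul_sub (a := α / 4) (by linarith)
    (c := (α / 4) ^ 2 * κ / 4) (by positivity)
    ((α / 4 * |α / 4 - 1| * (16 * max 1 (‖metivierForm J‖ ^ 2))
      + α / 4 * (8 * (n + 1) + 8 * m * ‖metivierForm J‖ ^ 2)) / 2)
  refine ⟨C, fun p hp => ?_⟩
  exact (hC _ (kN4_pos hp) _ (by positivity) (e2norm_sq_sq_le_kN4 p)).trans
    (le_VA hp (by linarith) hκ.le (hG p) (gradSq_kN4_le hskew p) (le_LSub_kN4 hskew p))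

/-- For `α ≥ 2` the potential `V_α` is bounded from below on `G*`. -/
theorem potential_bounded_below (n m : ℕ) (hn : 1 ≤ n) (hm : 1 ≤ m)
    (J : Fin m → Matrix (Fin (2*n)) (Fin (2*n)) ℝ)
    (hskew : ∀ k, (J k).transpose = -(J k))
    (hMet : ∀ t : Fin m → ℝ, t ≠ 0 → IsUnit (∑ k, t k • J k)) :
    ∀ α : ℝ, 2 ≤ α → ∃ K : ℝ, ∀ p : GrpPt n m, p ≠ 0 → K ≤ VA J α p :=
  potential_bounded_below_general n m J hskew hMet
end
end
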